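/- arXiv:1811.05928 — 10 statements merged into one kernel-verified Lean document; each statement's English description precedes it below -/
import Mathlib

section
/- Let φ : R → S be a Jordan homomorphism of associative rings, e ∈ R an idempotent, and r ∈ R an element commuting with e. Then φ(r)φ(e) = φ(e)φ(r) = φ(re). -/
theorem stmt_2 {R S : Type*} [Ring R] [Ring S] (φ : R → S)
    (hadd : ∀ r s : R, φ (r + s) = φ r + φ s)
    (hsq : ∀ r : R, φ (r * r) = φ r * φ r)
    (htr : ∀ r s : R, φ (r * s * r) = φ r * φ s * φ r)
    (e r : R) (he : e * e = e) (hcomm : e * r = r * e) :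
    φ r * φ e = φ e * φ r ∧ φ e * φ r = φ (r * e) := by
  -- Jordan product rule
  have key : ∀ a b : R, φ (a * b + b * a) = φ a * φ b + φ b * φ a := by
    intro a b
    have h2 : (a + b) * (a + b) = a * a + (a * b + b * a) + b * b := by
      noncomm_ring
    have h := hsq (a + b)
    rw [h2, hadd, hadd, hsq, hsq, hadd, hadd] at h
    have h3 : φ (a * b) + φ (b * a) =
        (φ a + φ b) * (φ a + φ b) - φ a * φ a - φ b * φ b := by
      rw [← h]; abel
    rw [hadd, h3]; noncomm_ring
  set E := φ e with hE
  set X := φ (r * e) with hX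
  have hE2 : E * E = E := by rw [hE, ← hsq, he]
  have h1 : X = E * φ r * E := by
    have : e * r * e = r * e := by rw [hcomm, mul_assoc, he]
    rw [hX, ← this, htr]
  have h2 : X + X = φ r * E + E * φ r := by
    have : r * e + e * r = r * e + r * e := by rw [hcomm]
    rw [hX, ← hadd, ← this, key]
  have hre : e * (r * e) = r * e := by rw [← mul_assoc, hcomm, mul_assoc, he]
  have h3 : X + X = X * E + E * X := by
    have : (r * e) * e + e * (r * e) = r * e + r * e := by
      rw [hre, mul_assoc, he]
    rw [hX, ← hadd, ← this, key]
  have h4 : E * X * E = X := by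
    have hq : e * (r * e) * e = r * e := by rw [hre, mul_assoc, he]
    rw [hX, hE, ← htr, hq]
  -- E * X = X
  have h5 : E * X = X := by
    have hm := congrArg (fun x => E * x) h3
    simp only [mul_add, ← mul_assoc, hE2] at hm
    rw [h4] at hm
    -- hm : E * X + E * X = X + E * X
    exact add_right_cancel hm
  -- X * E = X
  have h6 : X * E = X := by
    have hm := congrArg (fun x => x * E) h3
    simp only [add_mul, mul_assoc, hE2] at hm
    rw [← mul_assoc, h4] at hm
    -- hm : X * E + X * E = X * E + X
    exact add_left_cancel hm
  -- E * φ r = X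
  have h7 : E * φ r = X := by
    have hm := congrArg (fun x => E * x) h2
    simp only [mul_add, ← mul_assoc, hE2] at hm
    rw [← h1, h5] at hm
    -- hm : X + X = X + E * φ r  (some order)
    exact (add_left_cancel hm).symm
  -- φ r * E = X
  have h8 : φ r * E = X := by
    have hm := congrArg (fun x => x * E) h2
    simp only [add_mul, mul_assoc, hE2] at hm
    rw [← mul_assoc, ← h1, h6] at hm
    exact (add_right_cancel hm).symm
  exact ⟨h8.trans h7.symm, h7⟩
end

section
/- Let φ : R → S be a Jordan homomorphism of associative rings, e ∈ R an idempotent, and r ∈ R with er = re = 0. Then φ(e)φ(r) = φ(r)φ(e) = 0. -/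
theorem stmt_3 {R S : Type*} [Ring R] [Ring S] (φ : R → S)
    (hadd : ∀ r s : R, φ (r + s) = φ r + φ s)
    (hsq : ∀ r : R, φ (r * r) = φ r * φ r)
    (htr : ∀ r s : R, φ (r * s * r) = φ r * φ s * φ r)
    (e r : R) (he : e * e = e) (her : e * r = 0) (hre : r * e = 0) :
    φ e * φ r = 0 ∧ φ r * φ e = 0 := by
  have h0 : φ 0 = 0 := by
    have h := hadd 0 0
    simpa using h.symm
  have hee : φ e * φ e = φ e := by rw [← hsq, he]
  have hJ : φ e * φ r + φ r * φ e = 0 := by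
    have h1 : (e + r) * (e + r) = e + r * r := by
      rw [add_mul, mul_add, mul_add, he, her, hre, add_zero, zero_add]
    have h2 := hsq (e + r)
    rw [h1, hadd, hsq, hadd] at h2
    rw [add_mul, mul_add, mul_add, hee] at h2
    linear_combination (norm := noncomm_ring) -h2
  have here : φ e * φ r * φ e = 0 := by
    have : e * r * e = 0 := by rw [her, zero_mul]
    rw [← htr, this, h0]
  constructor
  · have := congrArg (φ e * ·) hJ
    simp [mul_add, ← mul_assoc, hee, here] at this
    exact this
  · have := congrArg (· * φ e) hJ
    simp [add_mul, mul_assoc, hee, here] at this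
    exact this
end

section
/- Let R = R₀ ⊕ R₁ as additive groups, where R₀ is a subring of R and R₁ is a two-sided ideal of R. Let ψ : R → S be a ring homomorphism and θ : R → S an anti-homomorphism such that ψ|_{R₀} = θ|_{R₀} and ψ(r)θ(s) = θ(s)ψ(r) = 0 for all r, s ∈ R₁. Then the near-sum φ : R → S, defined by φ|_{R₀} = ψ|_{R₀} and φ|_{R₁} = ψ|_{R₁} + θ|_{R₁} (extended additively), is a Jordan homomorphism. -/
theorem stmt_6 {R S : Type*} [Ring R] [Ring S]
    (R₀ R₁ : AddSubgroup R)
    (hsubring : ∀ a b : R, a ∈ R₀ → b ∈ R₀ → a * b ∈ R₀)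
    (hideal : ∀ a r : R, a ∈ R₁ → r * a ∈ R₁ ∧ a * r ∈ R₁)
    (hsum : ∀ r : R, ∃ a b : R, a ∈ R₀ ∧ b ∈ R₁ ∧ r = a + b)
    (hdisj : ∀ r : R, r ∈ R₀ → r ∈ R₁ → r = 0)
    (ψ θ φ : R → S)
    (hψadd : ∀ r s : R, ψ (r + s) = ψ r + ψ s)
    (hψmul : ∀ r s : R, ψ (r * s) = ψ r * ψ s)
    (hθadd : ∀ r s : R, θ (r + s) = θ r + θ s)
    (hθmul : ∀ r s : R, θ (r * s) = θ s * θ r)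
    (hagree : ∀ r ∈ R₀, ψ r = θ r)
    (horth : ∀ r ∈ R₁, ∀ s ∈ R₁, ψ r * θ s = 0 ∧ θ s * ψ r = 0)
    (hφadd : ∀ r s : R, φ (r + s) = φ r + φ s)
    (hφ₀ : ∀ r ∈ R₀, φ r = ψ r)
    (hφ₁ : ∀ r ∈ R₁, φ r = ψ r + θ r) :
    (∀ r : R, φ (r * r) = φ r * φ r) ∧
    (∀ r s : R, φ (r * s * r) = φ r * φ s * φ r) := by
  constructor
  · intro r
    obtain ⟨a, b, ha, hb, rfl⟩ := hsum r
    have hab : a * b ∈ R₁ := (hideal b a hb).1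
    have hba : b * a ∈ R₁ := (hideal b a hb).2
    have hbb : b * b ∈ R₁ := (hideal b b hb).1
    have hmem : a * b + b * a + b * b ∈ R₁ := R₁.add_mem (R₁.add_mem hab hba) hbb
    have hE : (a + b) * (a + b) = a * a + (a * b + b * a + b * b) := by noncomm_ring
    have hr : φ (a + b) = ψ a + (ψ b + θ b) := by rw [hφadd, hφ₀ a ha, hφ₁ b hb]
    have hz1 : ψ b * θ b = 0 := (horth b hb b hb).1
    have hz2 : θ b * ψ b = 0 := (horth b hb b hb).2
    rw [hE, hφadd, hφ₀ _ (hsubring a a ha ha), hφ₁ _ hmem, hr]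
    simp only [hψadd, hψmul, hθadd, hθmul]
    simp only [← hagree a ha]
    simp only [add_mul, mul_add, mul_assoc, hz1, hz2, mul_zero, zero_mul,
      add_zero, zero_add]
    abel
  · intro r s
    obtain ⟨a, b, ha, hb, rfl⟩ := hsum r
    obtain ⟨c, d, hc, hd, rfl⟩ := hsum s
    have memL : ∀ x t : R, x ∈ R₁ → t * x ∈ R₁ := fun x t h => (hideal x t h).1
    have memR : ∀ x t : R, x ∈ R₁ → x * t ∈ R₁ := fun x t h => (hideal x t h).2
    have hmem : a * c * b + a * d * a + a * d * b + b * c * a + b * c * b +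
        b * d * a + b * d * b ∈ R₁ := by
      refine R₁.add_mem (R₁.add_mem (R₁.add_mem (R₁.add_mem (R₁.add_mem
        (R₁.add_mem ?_ ?_) ?_) ?_) ?_) ?_) ?_
      · exact memL b (a * c) hb
      · exact memR (a * d) a (memL d a hd)
      · exact memL b (a * d) hb
      · exact memR (b * c) a (memR b c hb)
      · exact memL b (b * c) hb
      · exact memR (b * d) a (memR b d hb)
      · exact memL b (b * d) hb
    have hE : (a + b) * (c + d) * (a + b) = a * c * a +
        (a * c * b + a * d * a + a * d * b + b * c * a + b * c * b +
          b * d * a + b * d * b) := by noncomm_ring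
    have hr : φ (a + b) = ψ a + (ψ b + θ b) := by rw [hφadd, hφ₀ a ha, hφ₁ b hb]
    have hs : φ (c + d) = ψ c + (ψ d + θ d) := by rw [hφadd, hφ₀ c hc, hφ₁ d hd]
    have hz1 : ψ b * θ b = 0 := (horth b hb b hb).1
    have hz2 : θ b * ψ b = 0 := (horth b hb b hb).2
    have hz3 : ψ b * θ d = 0 := (horth b hb d hd).1
    have hz4 : θ d * ψ b = 0 := (horth b hb d hd).2
    have hz5 : ψ d * θ b = 0 := (horth d hd b hb).1
    have hz6 : θ b * ψ d = 0 := (horth d hd b hb).2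
    have hz7 : ψ d * θ d = 0 := (horth d hd d hd).1
    have hz8 : θ d * ψ d = 0 := (horth d hd d hd).2
    have hz9 : ψ b * (ψ c * θ b) = 0 := by
      have h1 : ψ c * θ b = θ (b * c) := by rw [hθmul, hagree c hc]
      rw [h1]
      exact (horth b hb (b * c) (memR b c hb)).1
    have hz10 : θ b * (ψ c * ψ b) = 0 := by
      rw [← hψmul]
      exact (horth (c * b) (memL b c hb) b hb).2
    rw [hE, hφadd, hφ₀ _ (hsubring (a * c) a (hsubring a c ha hc) ha),
      hφ₁ _ hmem, hr, hs]
    simp only [hψadd, hψmul, hθadd, hθmul]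
    simp only [← hagree a ha, ← hagree c hc]
    simp only [add_mul, mul_add, mul_assoc, hz1, hz2, hz3, hz4, hz5, hz6, hz7,
      hz8, hz9, hz10, mul_zero, zero_mul, add_zero, zero_add]
    abel
end

section
/- Let φ : R → S be a Jordan isomorphism of associative rings and e ∈ R an idempotent. Then φ(eRe) is closed under the multiplication of S; in particular, φ(eRe) is a ring under the operations of S with identity φ(e). -/
theorem stmt_7 {R S : Type*} [Ring R] [Ring S] (φ : R → S)
    (hadd : ∀ r s : R, φ (r + s) = φ r + φ s)
    (hsq : ∀ r : R, φ (r * r) = φ r * φ r)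
    (htr : ∀ r s : R, φ (r * s * r) = φ r * φ s * φ r)
    (hbij : Function.Bijective φ)
    (e : R) (he : e * e = e) :
    (∀ a b : S, a ∈ φ '' {x | ∃ r : R, x = e * r * e} →
      b ∈ φ '' {x | ∃ r : R, x = e * r * e} →
      a * b ∈ φ '' {x | ∃ r : R, x = e * r * e}) ∧
    (∀ a : S, a ∈ φ '' {x | ∃ r : R, x = e * r * e} →
      φ e * a = a ∧ a * φ e = a) := by
  have hp : φ e * φ e = φ e := by rw [← hsq, he]
  have hpl : ∀ x : S, φ e * (φ e * x) = φ e * x := fun x => by rw [← mul_assoc, hp]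
  have key : ∀ a : S, a ∈ φ '' {x | ∃ r : R, x = e * r * e} →
      a = φ e * a * φ e := by
    rintro a ⟨x, ⟨r, rfl⟩, rfl⟩
    rw [htr]
    simp only [mul_assoc, hpl]
    rw [hp]
  have mem : ∀ s : S, φ e * s * φ e ∈ φ '' {x | ∃ r : R, x = e * r * e} := by
    intro s
    obtain ⟨r, rfl⟩ := hbij.2 s
    exact ⟨e * r * e, ⟨r, rfl⟩, (htr e r)⟩
  constructor
  · intro a b ha hb
    have hab : a * b = φ e * (a * (φ e * b)) * φ e := by
      conv_lhs => rw [key a ha, key b hb]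
      simp only [mul_assoc, hpl]
    rw [hab]; exact mem _
  · intro a ha
    constructor
    · conv_lhs => rw [key a ha]
      rw [← mul_assoc, ← mul_assoc, hp, ← key a ha]
    · conv_lhs => rw [key a ha]
      rw [mul_assoc, mul_assoc, hp, ← mul_assoc, ← key a ha]
end

section
/- Let φ : R → S be a Jordan homomorphism of associative rings and e, f ∈ R idempotents with ef = fe = 0. Then for any r ∈ R, φ(erf + fre) = φ(e)φ(r)φ(f) + φ(f)φ(r)φ(e). -/
theorem stmt_10 {R S : Type*} [Ring R] [Ring S] (φ : R → S)
    (hadd : ∀ r s : R, φ (r + s) = φ r + φ s)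
    (hsq : ∀ r : R, φ (r * r) = φ r * φ r)
    (htr : ∀ r s : R, φ (r * s * r) = φ r * φ s * φ r)
    (e f : R) (he : e * e = e) (hf : f * f = f)
    (hef : e * f = 0) (hfe : f * e = 0) :
    ∀ r : R, φ (e * r * f + f * r * e) = φ e * φ r * φ f + φ f * φ r * φ e := by
  intro r
  have A := htr (e + f) r
  rw [hadd] at A
  have eq : (e + f) * r * (e + f) = (e * r * f + f * r * e) + (e * r * e + f * r * f) := by
    noncomm_ring
  rw [eq, hadd (e * r * f + f * r * e), hadd (e * r * e), htr e, htr f] at A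
  rw [eq_sub_of_add_eq A]
  noncomm_ring
end

section
/- Let φ : R → S be a Jordan homomorphism of associative rings, and suppose e ∈ R is a central idempotent. Then the map r ↦ φ(er) is a Jordan homomorphism from R to S. -/
theorem stmt_11 {R S : Type*} [Ring R] [Ring S] (φ : R → S)
    (hadd : ∀ r s : R, φ (r + s) = φ r + φ s)
    (hsq : ∀ r : R, φ (r * r) = φ r * φ r)
    (htr : ∀ r s : R, φ (r * s * r) = φ r * φ s * φ r)
    (e : R) (he : e * e = e) (hcentral : ∀ r : R, e * r = r * e) :
    (∀ r s : R, φ (e * (r + s)) = φ (e * r) + φ (e * s)) ∧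
    (∀ r : R, φ (e * (r * r)) = φ (e * r) * φ (e * r)) ∧
    (∀ r s : R, φ (e * (r * s * r)) = φ (e * r) * φ (e * s) * φ (e * r)) := by
  have hc : ∀ r : R, Commute r e := fun r => (hcentral r).symm
  have key : ∀ r s : R, (e * r) * (e * s) = e * (r * s) := fun r s => by
    rw [(hc r).mul_mul_mul_comm, he]
  refine ⟨fun r s => by rw [mul_add, hadd], fun r => ?_, fun r s => ?_⟩
  · rw [← key, hsq]
  · rw [show e * (r * s * r) = (e * r) * (e * s) * (e * r) by
      rw [key, key, mul_assoc], htr]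
end

section
/- Let φ : R → S be a Jordan homomorphism of associative rings, e ∈ R an idempotent, and r ∈ R with er = re. Then φ(e)φ(r)φ(e) = φ(e)φ(r) = φ(r)φ(e). -/
theorem stmt_12 {R S : Type*} [Ring R] [Ring S] (φ : R → S)
    (hadd : ∀ r s : R, φ (r + s) = φ r + φ s)
    (hsq : ∀ r : R, φ (r * r) = φ r * φ r)
    (htr : ∀ r s : R, φ (r * s * r) = φ r * φ s * φ r)
    (e r : R) (he : e * e = e) (hcomm : e * r = r * e) :
    φ e * φ r * φ e = φ e * φ r ∧ φ e * φ r = φ r * φ e := by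
  have hf : φ e * φ e = φ e := by rw [← hsq, he]
  have key : e * r * e = e * r := by
    rw [hcomm, mul_assoc, he, ← hcomm]
  have h1 : φ (e * r) = φ e * φ r * φ e := by
    rw [← key, htr]
  have hexp : (e + r) * (e + r) = e * e + (e * r + (e * r + r * r)) := by
    rw [add_mul, mul_add, mul_add, ← hcomm]; abel
  have h2 : φ e * φ r * φ e + φ e * φ r * φ e = φ e * φ r + φ r * φ e := by
    have h := hsq (e + r)
    rw [hexp, hadd, hadd, hadd, hsq, hsq, hadd, h1] at h
    have h' : φ e * φ e + (φ e * φ r * φ e + (φ e * φ r * φ e + φ r * φ r))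
        = φ e * φ e + (φ e * φ r + (φ r * φ e + φ r * φ r)) := by
      rw [h]; noncomm_ring
    have h'' := add_left_cancel h'
    have h''' : φ e * φ r * φ e + φ e * φ r * φ e + φ r * φ r
        = φ e * φ r + φ r * φ e + φ r * φ r := by
      rw [add_assoc, h'', add_assoc]
    exact add_right_cancel h'''
  have hL : φ e * φ r * φ e = φ e * φ r := by
    have h3 := congrArg (fun x => φ e * x) h2
    simp only [mul_add, ← mul_assoc, hf] at h3
    exact add_right_cancel h3
  refine ⟨hL, ?_⟩
  have h4 := congrArg (fun x => x * φ e) h2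
  simp only [add_mul, mul_assoc, hf] at h4
  have hR : φ e * (φ r * φ e) = φ r * φ e := add_left_cancel h4
  rw [← hL, mul_assoc, hR]
end

section
/- Let R and S be associative rings and φ : R → S a Jordan homomorphism. Suppose e, f, g ∈ R are pairwise orthogonal idempotents and r, s ∈ R. Then φ(e)φ(erf)φ(fsg)φ(g) = φ(e)φ(erfsg)φ(g). -/
theorem stmt_17 {R S : Type*} [Ring R] [Ring S] (φ : R → S)
    (hadd : ∀ r s : R, φ (r + s) = φ r + φ s)
    (hsq : ∀ r : R, φ (r * r) = φ r * φ r)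
    (htr : ∀ r s : R, φ (r * s * r) = φ r * φ s * φ r)
    (e f g : R) (he : e * e = e) (hf : f * f = f) (hg : g * g = g)
    (hef : e * f = 0) (hfe : f * e = 0)
    (heg : e * g = 0) (hge : g * e = 0)
    (hfg : f * g = 0) (hgf : g * f = 0) :
    ∀ r s : R, φ e * φ (e * r * f) * φ (f * s * g) * φ g =
      φ e * φ (e * r * f * s * g) * φ g := by
  intro r s
  have h0 : φ 0 = 0 := by
    have h := hadd 0 0
    rw [add_zero] at h
    nth_rewrite 1 [← add_zero (φ 0)] at h
    exact (add_left_cancel h).symm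
  have hpol : ∀ x y : R, φ (x * y + y * x) = φ x * φ y + φ y * φ x := by
    intro x y
    have h1 := hsq (x + y)
    have e1 : (x + y) * (x + y) = x * x + (x * y + y * x) + (y * y) := by noncomm_ring
    have e2 : (φ x + φ y) * (φ x + φ y)
        = φ x * φ x + (φ x * φ y + φ y * φ x) + (φ y * φ y) := by noncomm_ring
    rw [e1, hadd, hadd, hsq, hsq, hadd x y, e2] at h1
    exact add_left_cancel (add_right_cancel h1)
  have htri : ∀ x y z : R, φ (x * y * z + z * y * x) =
      φ x * φ y * φ z + φ z * φ y * φ x := by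
    intro x y z
    have h1 := htr (x + z) y
    have e1 : (x + z) * y * (x + z)
        = x * y * x + (x * y * z + z * y * x) + z * y * z := by noncomm_ring
    have e2 : (φ x + φ z) * φ y * (φ x + φ z)
        = φ x * φ y * φ x + (φ x * φ y * φ z + φ z * φ y * φ x)
          + φ z * φ y * φ z := by noncomm_ring
    rw [e1, hadd, hadd, htr, htr, hadd x z, e2] at h1
    exact add_left_cancel (add_right_cancel h1)
  have key : ∀ a b : R, a * a = a → a * b = 0 → b * a = 0 → φ a * φ b = 0 := by
    intro a b ha hab hba
    have h1 : φ a * φ b + φ b * φ a = 0 := by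
      have h := hpol a b
      rw [hab, hba, add_zero, h0] at h
      exact h.symm
    have h2 : φ a * φ b * φ a = 0 := by
      have h := htr a b
      rw [hab, zero_mul, h0] at h
      exact h.symm
    have haa : φ a * φ a = φ a := by rw [← hsq, ha]
    have hneg : φ a * φ b = -(φ b * φ a) := eq_neg_of_add_eq_zero_left h1
    calc φ a * φ b = φ a * (φ a * φ b) := by rw [← mul_assoc, haa]
      _ = φ a * (-(φ b * φ a)) := by rw [← hneg]
      _ = -(φ a * φ b * φ a) := by rw [mul_neg, mul_assoc]
      _ = 0 := by rw [h2, neg_zero]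
  have heF : φ e * φ f = 0 := key e f he hef hfe
  have heG : φ e * φ g = 0 := key e g he heg hge
  have hb : φ (f * s * g) = φ f * φ (f * s * g) * φ g + φ g * φ (f * s * g) * φ f := by
    have h1 := htri f (f * s * g) g
    have e1 : f * (f * s * g) * g + g * (f * s * g) * f = f * s * g := by
      have e2 : f * (f * s * g) * g = (f * f) * s * (g * g) := by noncomm_ring
      have e3 : g * (f * s * g) * f = (g * f) * s * (g * f) := by noncomm_ring
      rw [e2, e3, hf, hg, hgf, zero_mul, mul_zero, add_zero]
    rw [e1] at h1
    exact h1
  have heb : φ e * φ (f * s * g) = 0 := by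
    rw [hb, mul_add]
    simp only [← mul_assoc]
    rw [heF, heG]
    simp
  have hab : φ (e * r * f * s * g) = φ (e * r * f) * φ (f * s * g)
      + φ (f * s * g) * φ (e * r * f) := by
    have h1 := hpol (e * r * f) (f * s * g)
    have e1 : (e * r * f) * (f * s * g) + (f * s * g) * (e * r * f)
        = e * r * f * s * g := by
      have e2 : (e * r * f) * (f * s * g) = e * r * (f * f) * s * g := by noncomm_ring
      have e3 : (f * s * g) * (e * r * f) = f * s * (g * e) * r * f := by noncomm_ring
      rw [e2, e3, hf, hge, mul_zero, zero_mul, zero_mul, add_zero]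
    rw [e1] at h1
    exact h1
  rw [hab, mul_add, add_mul]
  simp only [← mul_assoc]
  rw [heb, zero_mul, zero_mul, add_zero]
end

section
/- Let φ : R → S be a Jordan isomorphism of associative unital rings and let {e_i}_{i∈I} be a family of pairwise orthogonal idempotents in R such that for a, b ∈ S: if φ(e_i) a φ(e_j) + φ(e_j) a φ(e_i) = φ(e_i) b φ(e_j) + φ(e_j) b φ(e_i) for all i ≠ j and φ(e_i) a φ(e_i) = φ(e_i) b φ(e_i) for all i, then under the corresponding hypothesis on R (elements r, t ∈ R are equal whenever e_i r e_j + e_j r e_i = e_i t e_j + e_j t e_i for all i ≠ j and e_i r e_i = e_i t e_i for all i), it follows that a = b. -/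
theorem stmt_18 {R S : Type*} [Ring R] [Ring S] {I : Type*} (φ : R → S)
    (hadd : ∀ r s : R, φ (r + s) = φ r + φ s)
    (hsq : ∀ r : R, φ (r * r) = φ r * φ r)
    (htr : ∀ r s : R, φ (r * s * r) = φ r * φ s * φ r)
    (hbij : Function.Bijective φ)
    (e : I → R) (hidem : ∀ i, e i * e i = e i)
    (horth : ∀ i j, i ≠ j → e i * e j = 0)
    (hsep : ∀ r t : R,
      (∀ i j, i ≠ j → e i * r * e j + e j * r * e i = e i * t * e j + e j * t * e i) →
      (∀ i, e i * r * e i = e i * t * e i) → r = t) :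
    ∀ a b : S,
      (∀ i j, i ≠ j →
        φ (e i) * a * φ (e j) + φ (e j) * a * φ (e i) =
        φ (e i) * b * φ (e j) + φ (e j) * b * φ (e i)) →
      (∀ i, φ (e i) * a * φ (e i) = φ (e i) * b * φ (e i)) → a = b := by
  -- polarization of the triple identity
  have hpol : ∀ x r y : R,
      φ (x * r * y + y * r * x) = φ x * φ r * φ y + φ y * φ r * φ x := by
    intro x r y
    have h := htr (x + y) r
    have hexp : (x + y) * r * (x + y) = x * r * x + (x * r * y + y * r * x) + y * r * y := by
      noncomm_ring
    rw [hadd x y, hexp, hadd, hadd, htr, htr] at h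
    have h2 : (φ x + φ y) * φ r * (φ x + φ y) =
        φ x * φ r * φ x + (φ x * φ r * φ y + φ y * φ r * φ x) + φ y * φ r * φ y := by
      noncomm_ring
    rw [h2] at h
    exact add_left_cancel (add_right_cancel h)
  intro a b hab hd
  obtain ⟨r, rfl⟩ := hbij.2 a
  obtain ⟨t, rfl⟩ := hbij.2 b
  have hr : r = t := by
    apply hsep
    · intro i j hij
      apply hbij.1
      rw [hpol, hpol]
      exact hab i j hij
    · intro i
      apply hbij.1
      rw [htr, htr]
      exact hd i
  rw [hr]
end

section
/- Let φ : R → S be a Jordan homomorphism of associative rings and e ∈ R a central idempotent. Then ψ(r) := φ(e)φ(r) defines a Jordan homomorphism ψ : R → S satisfying ψ(r) = φ(er) for all r ∈ R. -/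
theorem stmt_19 {R S : Type*} [Ring R] [Ring S] (φ : R → S)
    (hadd : ∀ r s : R, φ (r + s) = φ r + φ s)
    (hsq : ∀ r : R, φ (r * r) = φ r * φ r)
    (htr : ∀ r s : R, φ (r * s * r) = φ r * φ s * φ r)
    (e : R) (he : e * e = e) (hcentral : ∀ r : R, e * r = r * e) :
    (∀ r : R, φ e * φ r = φ (e * r)) ∧
    (∀ r s : R, φ e * φ (r + s) = φ e * φ r + φ e * φ s) ∧
    (∀ r : R, φ e * φ (r * r) = (φ e * φ r) * (φ e * φ r)) ∧
    (∀ r s : R, φ e * φ (r * s * r) = (φ e * φ r) * (φ e * φ s) * (φ e * φ r)) := by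
  have hf : φ e * φ e = φ e := by rw [← hsq, he]
  have htre : ∀ r : R, φ e * φ r * φ e = φ (e * r) := by
    intro r
    rw [← htr]
    congr 1
    rw [mul_assoc, ← hcentral r, ← mul_assoc, he]
  have hmain : ∀ r : R, φ e * φ r = φ (e * r) := by
    intro r
    have hre : φ (r * e) = φ (e * r) := by rw [hcentral]
    have h1 : (e + r) * (e + r) = e * e + (e * r + (r * e + r * r)) := by noncomm_ring
    have hexp : φ (e * e) + (φ (e * r) + (φ (r * e) + φ (r * r))) =
        φ e * φ e + φ e * φ r + (φ r * φ e + φ r * φ r) := by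
      rw [← hadd, ← hadd, ← hadd, ← h1, hsq, hadd]; noncomm_ring
    rw [hsq, hsq, hre] at hexp
    have hsum : φ e * φ r + φ r * φ e = φ (e * r) + φ (e * r) := by
      have := hexp
      abel_nf at this ⊢
      linear_combination (norm := abel_nf) -this
    rw [← htre r] at hsum
    have h2 := congrArg (fun x => φ e * x) hsum
    simp only [mul_add, ← mul_assoc, hf] at h2
    exact (add_right_cancel h2).trans (htre r)
  have key : ∀ a b : R, e * a * (e * b) = e * (a * b) := by
    intro a b
    rw [mul_assoc e a, ← mul_assoc a e, ← hcentral, ← mul_assoc, ← mul_assoc, he, mul_assoc]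
  refine ⟨hmain, fun r s => by rw [hadd, mul_add], fun r => ?_, fun r s => ?_⟩
  · simp only [hmain]
    rw [← key, hsq]
  · simp only [hmain]
    have h3 : e * (r * s * r) = (e * r) * (e * s) * (e * r) := by
      rw [key, key, mul_assoc r s r]
    rw [h3, htr]
end
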